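/- Let L be a symmetric positive definite m×m real matrix, D := diag(√L_11,…,√L_mm), and R := D^{-1} L D^{-1} the correlation matrix of L (so R is symmetric positive definite with unit diagonal). For every subset J ⊆ {1,…,m} with |J| ≥ 2 define θ^J := ∑_{J' ⊆ J} (−1)^{|J|−|J'|} · log det(R_{J'}). Then: (i) for every subset A ⊆ {1,…,m}, log det(R_A) = ∑_{J ⊆ A, |J| ≥ 2} θ^J (in particular θ satisfies the recursion θ^{I} = log det(R_I) − ∑_{J ⊊ I, |J| ≥ 2} θ^J, and θ^{{a,b}} = log(1 − R_{ab}²) for pairs); and (ii) for every subset A ⊆ {1,…,m}, P_L(A) = exp( ∑_{i∈A} log L_{ii} + ∑_{J ⊆ A, |J| ≥ 2} θ^J − log det(L + I) ). Thus the determinantal point process is embedded in the exponential family of log-linear models, with canonical interaction parameters θ^J (|J| ≥ 2) determined by L only through its correlation matrix R. -/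

import Mathlib

/-!
Since `L = D R D` with `D` diagonal, every principal minor factors as
`det L_A = (∏ i ∈ A, L i i) * det R_A`. The parameters `θ` are the Möbius transform of
`A ↦ log det R_A` on the Boolean lattice, so summing `θ` over the subsets of `A` gives back
`log det R_A`; and `θ^J = 0` for `|J| ≤ 1` because `R` has unit diagonal. Exponentiating
`log P_L(A) = log det L_A - log det (L + I)` then yields the log-linear form.
-/

/-- The determinant of the principal submatrix of `M` with rows and columns in `A`
(equal to `1` when `A = ∅`). -/
noncomputable def pminor {m : ℕ} (M : Matrix (Fin m) (Fin m) ℝ) (A : Finset (Fin m)) : ℝ :=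
  (M.submatrix (fun i : A => (i : Fin m)) (fun j : A => (j : Fin m))).det

/-- The `L`-ensemble determinantal point process. -/
noncomputable def dppP {m : ℕ} (L : Matrix (Fin m) (Fin m) ℝ) (A : Finset (Fin m)) : ℝ :=
  pminor L A / (L + 1).det

/-- The canonical interaction parameters `θ^J` of the log-linear embedding,
defined by Möbius inversion from the log principal minors of `R`. -/
noncomputable def thetaParam {m : ℕ} (R : Matrix (Fin m) (Fin m) ℝ) (J : Finset (Fin m)) : ℝ :=
  ∑ J' ∈ J.powerset, (-1 : ℝ) ^ (J.card - J'.card) * Real.log (pminor R J')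

open Finset Matrix

section Moebius

variable {α R : Type*} [DecidableEq α] [Ring R]

theorem sum_Icc_neg_one_pow_card_sub {K A : Finset α} (hKA : K ⊆ A) :
    ∑ J ∈ Icc K A, (-1 : R) ^ (#J - #K) = if K = A then 1 else 0 := by
  have hdisj : ∀ T ∈ (A \ K).powerset, Disjoint K T := fun T hT =>
    disjoint_of_subset_right (mem_powerset.mp hT) disjoint_sdiff
  have hempty : A \ K = ∅ ↔ K = A :=
    sdiff_eq_empty_iff_subset.trans ⟨subset_antisymm hKA, fun h => h ▸ subset_refl K⟩
  rw [Icc_eq_image_powerset hKA, sum_image fun T hT U hU hTU => by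
    rw [← union_sdiff_cancel_left (hdisj T hT), ← union_sdiff_cancel_left (hdisj U hU), hTU]]
  calc ∑ T ∈ (A \ K).powerset, (-1 : R) ^ (#(K ∪ T) - #K)
      = ((∑ T ∈ (A \ K).powerset, (-1 : ℤ) ^ #T : ℤ) : R) := by
        push_cast
        refine sum_congr rfl fun T hT => ?_
        rw [card_union_of_disjoint (hdisj T hT), Nat.add_sub_cancel_left]
    _ = if K = A then 1 else 0 := by
        rw [sum_powerset_neg_one_pow_card]
        simp only [hempty]
        split_ifs <;> simp

theorem sum_powerset_sum_powerset_neg_one_pow_mul (g : Finset α → R) (A : Finset α) :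
    ∑ J ∈ A.powerset, ∑ K ∈ J.powerset, (-1 : R) ^ (#J - #K) * g K = g A := by
  rw [sum_comm' (t' := A.powerset) (s' := fun K => Icc K A) fun J K => by
    simp only [mem_powerset, mem_Icc]
    exact ⟨fun h => ⟨⟨h.2, h.1⟩, h.2.trans h.1⟩, fun h => ⟨h.1.2, h.1.1⟩⟩]
  simp_rw [← sum_mul]
  rw [sum_eq_single_of_mem A (mem_powerset_self A) fun K hK hKA => by
    rw [sum_Icc_neg_one_pow_card_sub (mem_powerset.mp hK), if_neg hKA, zero_mul]]
  rw [sum_Icc_neg_one_pow_card_sub subset_rfl, if_pos rfl, one_mul]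

end Moebius

section PrincipalMinor

variable {m : ℕ} (M : Matrix (Fin m) (Fin m) ℝ)

theorem pminor_empty : pminor M ∅ = 1 := det_isEmpty

theorem pminor_singleton (a : Fin m) : pminor M {a} = M a a := by
  rw [pminor, det_unique]
  rfl

theorem pminor_pair {a b : Fin m} (hab : a ≠ b) :
    pminor M {a, b} = M a a * M b b - M a b * M b a := by
  let v : Fin 2 → ({a, b} : Finset (Fin m)) := ![⟨a, by simp⟩, ⟨b, by simp⟩]
  have hv : Function.Bijective v := by
    refine ⟨fun i j hij => ?_, ?_⟩
    · fin_cases i <;> fin_cases j <;> simp_all [v, Subtype.ext_iff, hab.symm]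
    · rintro ⟨x, hx⟩
      rcases mem_insert.mp hx with rfl | hx
      · exact ⟨0, rfl⟩
      · exact ⟨1, by simp [v, mem_singleton.mp hx]⟩
  rw [pminor, ← det_submatrix_equiv_self (Equiv.ofBijective v hv), det_fin_two]
  rfl

theorem pminor_pos {M : Matrix (Fin m) (Fin m) ℝ} (hM : M.PosDef) (A : Finset (Fin m)) :
    0 < pminor M A :=
  (hM.submatrix Subtype.coe_injective).det_pos

theorem pminor_diagonal_mul_mul_diagonal (d e : Fin m → ℝ) (A : Finset (Fin m)) :
    pminor (diagonal d * M * diagonal e) A = (∏ i ∈ A, d i * e i) * pminor M A := by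
  have hsub : (diagonal d * M * diagonal e).submatrix (fun i : A => (i : Fin m)) (fun j : A => j)
      = diagonal (fun i : A => d i) * M.submatrix (fun i : A => (i : Fin m)) (fun j : A => j) *
          diagonal (fun i : A => e i) := by
    ext i j
    simp only [mul_diagonal, diagonal_mul, submatrix_apply]
  rw [pminor, hsub, det_mul, det_mul, det_diagonal, det_diagonal, prod_mul_distrib,
    prod_coe_sort A d, prod_coe_sort A e, pminor]
  ring

end PrincipalMinor

theorem inv_diagonal_of_ne_zero {n K : Type*} [Fintype n] [DecidableEq n] [Field K] {v : n → K}
    (hv : ∀ i, v i ≠ 0) : (diagonal v)⁻¹ = diagonal fun i => (v i)⁻¹ :=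
  inv_eq_left_inv <| by simp [diagonal_mul_diagonal, hv]

noncomputable def correlation {m : ℕ} (L : Matrix (Fin m) (Fin m) ℝ) : Matrix (Fin m) (Fin m) ℝ :=
  diagonal (fun i => (√(L i i))⁻¹) * L * diagonal (fun i => (√(L i i))⁻¹)

section Correlation

variable {m : ℕ} {L : Matrix (Fin m) (Fin m) ℝ}

theorem correlation_apply (i j : Fin m) :
    correlation L i j = (√(L i i))⁻¹ * L i j * (√(L j j))⁻¹ := by
  simp only [correlation, mul_diagonal, diagonal_mul]

theorem correlation_apply_self {i : Fin m} (hi : 0 < L i i) : correlation L i i = 1 := by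
  rw [correlation_apply, mul_right_comm, ← mul_inv, Real.mul_self_sqrt hi.le,
    inv_mul_cancel₀ hi.ne']

theorem correlation_apply_comm (hL : L.IsSymm) (i j : Fin m) :
    correlation L j i = correlation L i j := by
  rw [correlation_apply, correlation_apply, hL.apply i j]
  ring

theorem pminor_eq_prod_diag_mul_pminor_correlation (hL : ∀ i, 0 < L i i) (A : Finset (Fin m)) :
    pminor L A = (∏ i ∈ A, L i i) * pminor (correlation L) A := by
  rw [correlation, pminor_diagonal_mul_mul_diagonal, ← mul_assoc, ← prod_mul_distrib,
    prod_eq_one fun i _ => ?_, one_mul]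
  rw [← mul_inv, Real.mul_self_sqrt (hL i).le, mul_inv_cancel₀ (hL i).ne']

theorem log_pminor_eq_sum_log_diag_add_log_pminor_correlation (hL : L.PosDef)
    (A : Finset (Fin m)) :
    Real.log (pminor L A) = ∑ i ∈ A, Real.log (L i i) + Real.log (pminor (correlation L) A) := by
  have hdiag : ∀ i, 0 < L i i := fun i => hL.diag_pos
  have hfactor := pminor_eq_prod_diag_mul_pminor_correlation hdiag A
  have hprod : 0 < ∏ i ∈ A, L i i := prod_pos fun i _ => hdiag i
  have hcorr : 0 < pminor (correlation L) A :=
    (mul_pos_iff_of_pos_left hprod).mp (hfactor ▸ pminor_pos hL A)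
  rw [hfactor, Real.log_mul hprod.ne' hcorr.ne',
    Real.log_prod fun i _ => (hdiag i).ne']

end Correlation

section LogLinear

variable {m : ℕ} {R : Matrix (Fin m) (Fin m) ℝ}

theorem sum_powerset_thetaParam (R : Matrix (Fin m) (Fin m) ℝ) (A : Finset (Fin m)) :
    ∑ J ∈ A.powerset, thetaParam R J = Real.log (pminor R A) :=
  sum_powerset_sum_powerset_neg_one_pow_mul (fun K => Real.log (pminor R K)) A

theorem thetaParam_of_card_lt_two (hR : ∀ i, R i i = 1) {J : Finset (Fin m)} (hJ : #J < 2) :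
    thetaParam R J = 0 := by
  interval_cases h : #J
  · simp [card_eq_zero.mp h, thetaParam, pminor_empty]
  · obtain ⟨a, rfl⟩ := card_eq_one.mp h
    rw [thetaParam, ← insert_empty, sum_powerset_insert (notMem_empty a)]
    simp [pminor_empty, pminor_singleton, hR]

theorem log_pminor_eq_sum_thetaParam (hR : ∀ i, R i i = 1) (A : Finset (Fin m)) :
    Real.log (pminor R A) = ∑ J ∈ A.powerset.filter (fun J => 2 ≤ J.card), thetaParam R J := by
  rw [← sum_powerset_thetaParam, ← sum_filter_add_sum_filter_not A.powerset (fun J => 2 ≤ #J),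
    add_eq_left]
  exact sum_eq_zero fun J hJ => thetaParam_of_card_lt_two hR (not_le.mp (mem_filter.mp hJ).2)

theorem thetaParam_eq_log_pminor_sub_sum (hR : ∀ i, R i i = 1) {I : Finset (Fin m)}
    (hI : 2 ≤ #I) :
    thetaParam R I = Real.log (pminor R I)
      - ∑ J ∈ (I.powerset.filter (fun J => 2 ≤ J.card)).erase I, thetaParam R J := by
  rw [log_pminor_eq_sum_thetaParam hR,
    ← add_sum_erase _ _ (mem_filter.mpr ⟨mem_powerset_self I, hI⟩), add_sub_cancel_right]

theorem thetaParam_pair (hR : ∀ i, R i i = 1) {a b : Fin m} (hab : a ≠ b)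
    (hba : R b a = R a b) : thetaParam R {a, b} = Real.log (1 - R a b ^ 2) := by
  have hfilter : ({a, b} : Finset (Fin m)).powerset.filter (fun J => 2 ≤ J.card) = {{a, b}} := by
    ext J
    simp only [mem_filter, mem_powerset, mem_singleton]
    constructor
    · exact fun h => eq_of_subset_of_card_le h.1 (card_pair hab ▸ h.2)
    · rintro rfl
      exact ⟨subset_rfl, (card_pair hab).ge⟩
  rw [thetaParam_eq_log_pminor_sub_sum hR (card_pair hab).ge, hfilter, erase_singleton,
    sum_empty, sub_zero, pminor_pair R hab, hR, hR, hba]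
  ring_nf

end LogLinear

theorem dppP_eq_exp {m : ℕ} {L : Matrix (Fin m) (Fin m) ℝ} (hL : L.PosDef) (A : Finset (Fin m)) :
    dppP L A = Real.exp (Real.log (pminor L A) - Real.log (L + 1).det) := by
  have hdet : 0 < (L + 1).det := (hL.add_posSemidef PosDef.one.posSemidef).det_pos
  rw [Real.exp_sub, Real.exp_log (pminor_pos hL A), Real.exp_log hdet, dppP]

theorem dpp_loglinear_embedding (m : ℕ) (L : Matrix (Fin m) (Fin m) ℝ)
    (hsymm : L.IsSymm) (hL : L.PosDef)
    (D R : Matrix (Fin m) (Fin m) ℝ)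
    (hD : D = Matrix.diagonal (fun i => Real.sqrt (L i i)))
    (hR : R = D⁻¹ * L * D⁻¹) :
    (∀ A : Finset (Fin m),
      Real.log (pminor R A)
        = ∑ J ∈ A.powerset.filter (fun J => 2 ≤ J.card), thetaParam R J) ∧
    (∀ I : Finset (Fin m), 2 ≤ I.card →
      thetaParam R I
        = Real.log (pminor R I)
          - ∑ J ∈ (I.powerset.filter (fun J => 2 ≤ J.card)).erase I, thetaParam R J) ∧
    (∀ a b : Fin m, a ≠ b → thetaParam R {a, b} = Real.log (1 - (R a b) ^ 2)) ∧
    (∀ A : Finset (Fin m),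
      dppP L A
        = Real.exp ((∑ i ∈ A, Real.log (L i i))
            + (∑ J ∈ A.powerset.filter (fun J => 2 ≤ J.card), thetaParam R J)
            - Real.log (L + 1).det)) := by
  have hRL : R = correlation L := by
    rw [hR, hD, inv_diagonal_of_ne_zero fun i => (Real.sqrt_pos.mpr hL.diag_pos).ne']
    rfl
  subst hRL
  have hdiag : ∀ i, correlation L i i = 1 := fun i => correlation_apply_self hL.diag_pos
  refine ⟨log_pminor_eq_sum_thetaParam hdiag, fun I => thetaParam_eq_log_pminor_sub_sum hdiag,
    fun a b hab => thetaParam_pair hdiag hab (correlation_apply_comm hsymm a b), fun A => ?_⟩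
  rw [dppP_eq_exp hL, log_pminor_eq_sum_log_diag_add_log_pminor_correlation hL,
    log_pminor_eq_sum_thetaParam hdiag]
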